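/- arXiv:1205.4614 — 5 statements merged into one kernel-verified Lean document; each statement's English description precedes it below -/
import Mathlib

section
/- Let q ∈ C with q^p = 1, p odd, and let f : Z → C satisfy a two-term recursion a(k) f(k-1) = d(k) f(k+1) for all k ∈ Z, where a, d : Z → C are p-periodic and nonvanishing. If the averages differ, i.e. ∏_{k=1}^{p} a(k) ≠ ∏_{k=1}^{p} d(k), and f is p-periodic, then f ≡ 0. -/
/-!
Multiplying the recursion `a k * f (k - 1) = d k * f (k + 1)` over one period gives
`(∏ a) * ∏ f = (∏ d) * ∏ f`, because a product of a `p`-periodic function over `p` consecutive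
integers does not depend on where the window starts. As `∏ a ≠ ∏ d`, some value `f k₀` vanishes.
With nonvanishing coefficients the recursion carries this zero to every `k₀ + 2n`, and since `p`
is odd these integers meet every residue class modulo `p`.
-/

open Finset Function

theorem Function.Periodic.prod_range_add_one_add {M : Type*} [CommMonoid M] {f : ℤ → M} {p : ℕ}
    (hf : Periodic f p) (c : ℤ) :
    ∏ k ∈ range p, f (k + 1 + c) = ∏ k ∈ range p, f (k + c) := by
  cases p with
  | zero => simp
  | succ n =>
    rw [prod_range_succ, prod_range_succ' (fun k : ℕ => f (k + c))]
    have hwrap : f ((n : ℤ) + 1 + c) = f ((0 : ℕ) + c) := by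
      simpa [add_comm, add_left_comm] using hf c
    rw [hwrap]
    push_cast
    rfl

theorem Function.Periodic.prod_range_add {M : Type*} [CommMonoid M] {f : ℤ → M} {p : ℕ}
    (hf : Periodic f p) (c : ℤ) :
    ∏ k ∈ range p, f (k + c) = ∏ k ∈ range p, f k := by
  induction c using Int.induction_on with
  | zero => simp
  | succ n ih =>
    simpa only [add_assoc, add_comm (n : ℤ) 1] using (hf.prod_range_add_one_add n).trans ih
  | pred n ih =>
    rw [← ih, ← hf.prod_range_add_one_add]
    simp only [add_sub_cancel, add_assoc]

theorem exists_eq_zero_of_prod_ne_prod {M : Type*} [CommMonoidWithZero M] [IsCancelMulZero M]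
    {a d f : ℤ → M} {p : ℕ} (hrec : ∀ k : ℤ, a k * f (k - 1) = d k * f (k + 1)) (hfp : Periodic f p)
    (hav : ∏ k ∈ range p, a ((k : ℤ) + 1) ≠ ∏ k ∈ range p, d ((k : ℤ) + 1)) :
    ∃ k, f k = 0 := by
  by_contra! hf0
  have hprod : (∏ k ∈ range p, a ((k : ℤ) + 1)) * ∏ k ∈ range p, f k
      = (∏ k ∈ range p, d ((k : ℤ) + 1)) * ∏ k ∈ range p, f (k + 2) := by
    rw [← prod_mul_distrib, ← prod_mul_distrib]
    refine prod_congr rfl fun k _ => ?_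
    simpa only [add_sub_cancel_right, add_assoc, one_add_one_eq_two] using hrec (k + 1)
  rw [hfp.prod_range_add] at hprod
  have : Nontrivial M := ⟨⟨f 0, 0, hf0 0⟩⟩
  have hne : ∏ k ∈ range p, f k ≠ 0 := prod_ne_zero_iff.mpr fun k _ => hf0 k
  exact hav (mul_right_cancel₀ hne hprod)

theorem eq_zero_add_two_mul_of_eq_zero {M : Type*} [MulZeroClass M] [NoZeroDivisors M]
    {a d f : ℤ → M} (ha0 : ∀ k, a k ≠ 0) (hd0 : ∀ k, d k ≠ 0)
    (hrec : ∀ k : ℤ, a k * f (k - 1) = d k * f (k + 1)) {k₀ : ℤ} (hk₀ : f k₀ = 0) (n : ℤ) :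
    f (k₀ + 2 * n) = 0 := by
  induction n using Int.induction_on with
  | zero => simpa using hk₀
  | succ n ih =>
    have h := hrec (k₀ + 2 * n + 1)
    rw [add_sub_cancel_right, ih, mul_zero, eq_comm, mul_eq_zero] at h
    convert h.resolve_left (hd0 _) using 2
    ring
  | pred n ih =>
    have h := hrec (k₀ + 2 * -n - 1)
    rw [sub_add_cancel, ih, mul_zero, mul_eq_zero] at h
    convert h.resolve_left (ha0 _) using 2
    ring

theorem Function.Periodic.eq_of_forall_add_two_mul_eq {α : Type*} {f : ℤ → α} {p : ℤ}
    (hf : Periodic f p) (hp : Odd p) {k₀ : ℤ} {y : α} (h : ∀ n, f (k₀ + 2 * n) = y) (k : ℤ) :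
    f k = y := by
  obtain ⟨s, rfl⟩ := hp
  -- `k - (k - k₀) * (2 * s + 1) = k₀ + 2 * -(s * (k - k₀))`
  rw [← hf.sub_int_mul_eq (k - k₀), ← h (-(s * (k - k₀))), Int.cast_id]
  ring_nf

theorem stmt_1_general (p : ℕ) (hp : Odd p)
    (a d f : ℤ → ℂ)
    (ha0 : ∀ k : ℤ, a k ≠ 0) (hd0 : ∀ k : ℤ, d k ≠ 0)
    (hrec : ∀ k : ℤ, a k * f (k - 1) = d k * f (k + 1))
    (hav : ∏ k ∈ Finset.range p, a ((k : ℤ) + 1) ≠ ∏ k ∈ Finset.range p, d ((k : ℤ) + 1))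
    (hfp : ∀ k : ℤ, f (k + p) = f k) :
    ∀ k : ℤ, f k = 0 := by
  obtain ⟨k₀, hk₀⟩ := exists_eq_zero_of_prod_ne_prod hrec hfp hav
  exact Periodic.eq_of_forall_add_two_mul_eq hfp hp.natCast
    (eq_zero_add_two_mul_of_eq_zero ha0 hd0 hrec hk₀)

/-- q-Wronskian vanishing: a p-periodic solution of the two-term
recursion with p-periodic nonvanishing coefficients whose averages differ must vanish. -/
theorem stmt_1 (p : ℕ) (hp : Odd p) (hp0 : 0 < p) (q : ℂ) (hq : q ^ p = 1)
    (a d f : ℤ → ℂ)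
    (hap : ∀ k : ℤ, a (k + p) = a k) (hdp : ∀ k : ℤ, d (k + p) = d k)
    (ha0 : ∀ k : ℤ, a k ≠ 0) (hd0 : ∀ k : ℤ, d k ≠ 0)
    (hrec : ∀ k : ℤ, a k * f (k - 1) = d k * f (k + 1))
    (hav : ∏ k ∈ Finset.range p, a ((k : ℤ) + 1) ≠ ∏ k ∈ Finset.range p, d ((k : ℤ) + 1))
    (hfp : ∀ k : ℤ, f (k + p) = f k) :
    ∀ k : ℤ, f k = 0 :=
  stmt_1_general p hp a d f ha0 hd0 hrec hav hfp
end

section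
/- Let p be odd, q a primitive p-th root of unity, and let a, d : Z/pZ → C be nonvanishing with ∏_j a(j) ≠ ∏_j d(j). Suppose Q, Q̄ : Z/pZ → C both satisfy t(j)X(j) = a(j)X(j−1) + d(j)X(j+1) for the same t and are both nonzero. Then Q̄ is a scalar multiple of Q. -/
/-!
The q-Wronskian `W j = Q j * Qb (j - 1) - Qb j * Q (j - 1)` of two solutions of the Baxter
equation satisfies `a j * W j = d j * W (j + 1)`. Multiplying over the cycle gives
`(∏ a) * ∏ W = (∏ d) * ∏ W`, so `∏ W = 0`; since `d` does not vanish, one zero of `W`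
propagates around the cycle and `W ≡ 0`. If `Q j ≠ 0`, then `R = Qb - (Qb j / Q j) • Q` is a
solution with the same Wronskian against `Q`, so `R j = 0` forces `R (j + 1) = 0`, and the
two-term recursion with nonvanishing `d` makes `R` vanish everywhere.
-/

namespace ZMod

theorem forall_of_forall_imp_add_one {n : ℕ} [NeZero n] {P : ZMod n → Prop} {j₀ : ZMod n}
    (h₀ : P j₀) (hstep : ∀ j, P j → P (j + 1)) (j : ZMod n) : P j := by
  obtain ⟨k, hk⟩ := natCast_zmod_surjective (j - j₀)
  obtain rfl : j = j₀ + k := by rw [hk]; ring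
  induction k with
  | zero => simpa using h₀
  | succ k ih =>
    rw [Nat.cast_succ, ← add_assoc]
    exact hstep _ (ih (by ring))

end ZMod

namespace Baxter

variable {n : ℕ} {K : Type*} [Field K] (t a d : ZMod n → K)

def IsSolution (X : ZMod n → K) : Prop :=
  ∀ j, t j * X j = a j * X (j - 1) + d j * X (j + 1)

def qWronskian (Q Qb : ZMod n → K) (j : ZMod n) : K :=
  Q j * Qb (j - 1) - Qb j * Q (j - 1)

variable {t a d}

theorem IsSolution.sub_smul {Q Qb : ZMod n → K} (hQ : IsSolution t a d Q)
    (hQb : IsSolution t a d Qb) (c : K) : IsSolution t a d (Qb - c • Q) := by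
  intro j
  simp only [Pi.sub_apply, Pi.smul_apply, smul_eq_mul]
  linear_combination hQb j - c * hQ j

theorem IsSolution.eq_zero_of_apply_eq_zero_of_apply_add_one [NeZero n] (hd : ∀ j, d j ≠ 0)
    {R : ZMod n → K} (hR : IsSolution t a d R) {j₀ : ZMod n} (h₀ : R j₀ = 0)
    (h₁ : R (j₀ + 1) = 0) : R = 0 := by
  suffices h : ∀ j, R j = 0 ∧ R (j + 1) = 0 from funext fun j => (h j).1
  refine ZMod.forall_of_forall_imp_add_one (P := fun j => R j = 0 ∧ R (j + 1) = 0) ⟨h₀, h₁⟩ ?_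
  rintro j ⟨hj, hj₁⟩
  refine ⟨hj₁, ?_⟩
  have hrec := hR (j + 1)
  rw [add_sub_cancel_right, hj, hj₁] at hrec
  simpa [hd] using hrec.symm

theorem qWronskian_mul_eq {Q Qb : ZMod n → K} (hQ : IsSolution t a d Q)
    (hQb : IsSolution t a d Qb) (j : ZMod n) :
    a j * qWronskian Q Qb j = d j * qWronskian Q Qb (j + 1) := by
  simp only [qWronskian, add_sub_cancel_right]
  linear_combination Qb j * hQ j - Q j * hQb j

theorem eq_zero_of_mul_eq_mul_add_one [NeZero n] {W : ZMod n → K} (hd : ∀ j, d j ≠ 0)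
    (hav : ∏ j, a j ≠ ∏ j, d j) (hW : ∀ j, a j * W j = d j * W (j + 1)) : W = 0 := by
  have hprod : (∏ j, a j) * ∏ j, W j = (∏ j, d j) * ∏ j, W j := by
    calc (∏ j, a j) * ∏ j, W j = (∏ j, d j) * ∏ j, W (j + 1) := by
          simp only [← Finset.prod_mul_distrib, hW]
      _ = (∏ j, d j) * ∏ j, W j := by
          rw [← Equiv.prod_comp (Equiv.addRight 1) W, Equiv.coe_addRight]
  obtain ⟨j₀, -, hj₀⟩ := Finset.prod_eq_zero_iff.mp
    (by_contra fun h => hav (mul_right_cancel₀ h hprod))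
  funext j
  refine ZMod.forall_of_forall_imp_add_one (P := fun j => W j = 0) hj₀ (fun j hj => ?_) j
  simpa [hj, hd] using (hW j).symm

theorem qWronskian_sub_smul (Q Qb : ZMod n → K) (c : K) :
    qWronskian Q (Qb - c • Q) = qWronskian Q Qb := by
  funext j
  simp only [qWronskian, Pi.sub_apply, Pi.smul_apply, smul_eq_mul]
  ring

theorem apply_add_one_eq_zero_of_qWronskian_eq_zero {Q R : ZMod n → K} (hW : qWronskian Q R = 0)
    {j : ZMod n} (hQ : Q j ≠ 0) (hR : R j = 0) : R (j + 1) = 0 := by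
  have := congrFun hW (j + 1)
  simp only [qWronskian, add_sub_cancel_right, hR, Pi.zero_apply] at this
  simpa [hQ] using this

end Baxter

open Baxter in
theorem stmt_10_general (p : ℕ) [NeZero p]
    (t a d : ZMod p → ℂ) (hd0 : ∀ j, d j ≠ 0)
    (hav : ∏ j : ZMod p, a j ≠ ∏ j : ZMod p, d j)
    (Q Qb : ZMod p → ℂ) (hQ : Q ≠ 0)
    (hQrec : ∀ j, t j * Q j = a j * Q (j - 1) + d j * Q (j + 1))
    (hQbrec : ∀ j, t j * Qb j = a j * Qb (j - 1) + d j * Qb (j + 1)) :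
    ∃ c : ℂ, ∀ j, Qb j = c * Q j := by
  have hW : qWronskian Q Qb = 0 :=
    eq_zero_of_mul_eq_mul_add_one hd0 hav (qWronskian_mul_eq hQrec hQbrec)
  obtain ⟨j, hj : Q j ≠ 0⟩ := Function.ne_iff.mp hQ
  set c := Qb j / Q j
  have hR₀ : (Qb - c • Q) j = 0 := by simp [c, hj]
  have hR₁ : (Qb - c • Q) (j + 1) = 0 :=
    apply_add_one_eq_zero_of_qWronskian_eq_zero ((qWronskian_sub_smul Q Qb c).trans hW) hj hR₀
  have hR : Qb - c • Q = 0 :=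
    (IsSolution.sub_smul hQrec hQbrec c).eq_zero_of_apply_eq_zero_of_apply_add_one hd0 hR₀ hR₁
  exact ⟨c, fun j => by simpa [sub_eq_zero] using congrFun hR j⟩

/-- uniqueness up to scalar of nonzero solutions of the cyclic
Baxter equation when the averages of the coefficients differ. -/
theorem stmt_10 (p : ℕ) [NeZero p] (hp : Odd p) (q : ℂ) (hq : IsPrimitiveRoot q p)
    (t a d : ZMod p → ℂ) (ha0 : ∀ j, a j ≠ 0) (hd0 : ∀ j, d j ≠ 0)
    (hav : ∏ j : ZMod p, a j ≠ ∏ j : ZMod p, d j)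
    (Q Qb : ZMod p → ℂ) (hQ : Q ≠ 0) (hQb : Qb ≠ 0)
    (hQrec : ∀ j, t j * Q j = a j * Q (j - 1) + d j * Q (j + 1))
    (hQbrec : ∀ j, t j * Qb j = a j * Qb (j - 1) + d j * Qb (j + 1)) :
    ∃ c : ℂ, ∀ j, Qb j = c * Q j :=
  stmt_10_general p t a d hd0 hav Q Qb hQ hQrec hQbrec
end

section
/- Let p = 2l+1, q a primitive p-th root of unity, and let the cyclic tridiagonal p×p matrix D(λ) (diagonal t(q^{j-1}λ), subdiagonal −a(q^{j-1}λ), superdiagonal −d(q^{j-1}λ), corners −a(λ), −d(q^{2l}λ)) have determinant identically zero and rank p−1 for every λ ≠ 0. Then the cofactors satisfy C_{1,1}(qλ)/C_{1,p}(qλ) = C_{1,2}(λ)/C_{1,1}(λ) wherever the denominators are nonzero, and the Baxter relation t(λ) C_{1,1}(λ) = a(λ) C_{1,p}(λ) + d(λ) C_{1,2}(λ) holds for all λ. -/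
/-!
Write `M = D(λ)`. Corank one makes `M` singular, so `M * adj M = det M • 1 = 0` puts every column
of `adj M` into the one-dimensional kernel of `M`: `adj M` has rank one and its `2 × 2` minors
vanish, `C₁₁ C₂₂ = C₁₂ C₂₁`. Since `q ^ p = 1`, `D(qλ)` is `D(λ)` with rows and columns rotated
cyclically by one step, whence `C_{i,j}(qλ) = C_{i+1,j+1}(λ)`; in particular `C₁₁(qλ) = C₂₂(λ)` and
`C_{1,p}(qλ) = C_{2,1}(λ)`, and the minor identity becomes the first claim. The Baxter relation is
the expansion of `det D(λ) = 0` along the first row, whose only nonzero entries are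
`t(λ)`, `-d(λ)` and `-a(λ)`.
-/

theorem pow_val_add_one_of_pow_eq_one {M : Type*} [Monoid M] {n : ℕ} {q : M}
    (hq : q ^ (n + 1) = 1) (i : Fin (n + 1)) : q ^ ((i + 1 : Fin (n + 1)) : ℕ) = q ^ (i : ℕ) * q := by
  rw [Fin.val_add_one]
  split_ifs with h
  · rw [h, Fin.val_last, ← pow_succ, hq, pow_zero]
  · rw [pow_succ]

namespace Submodule

theorem apply_mul_apply_eq_of_finrank_eq_one {K ι : Type*} [Field K] {W : Submodule K (ι → K)}
    (hW : Module.finrank K W = 1) {u w : ι → K} (hu : u ∈ W) (hw : w ∈ W) (i j : ι) :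
    u i * w j = u j * w i := by
  obtain ⟨v, -, hv⟩ := finrank_eq_one_iff'.mp hW
  obtain ⟨a, rfl⟩ : ∃ a : K, a • (v : ι → K) = u := by
    obtain ⟨a, ha⟩ := hv ⟨u, hu⟩
    exact ⟨a, congrArg Subtype.val ha⟩
  obtain ⟨b, rfl⟩ : ∃ b : K, b • (v : ι → K) = w := by
    obtain ⟨b, hb⟩ := hv ⟨w, hw⟩
    exact ⟨b, congrArg Subtype.val hb⟩
  simp only [Pi.smul_apply, smul_eq_mul]
  ring

end Submodule

namespace Matrix

section Adjugate

variable {n K : Type*} [Fintype n] [Field K]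

theorem finrank_ker_mulVecLin_eq_one {A : Matrix n n K} (hA : A.rank + 1 = Fintype.card n) :
    Module.finrank K (LinearMap.ker A.mulVecLin) = 1 := by
  have := A.mulVecLin.finrank_range_add_finrank_ker
  rw [Module.finrank_fintype_fun_eq_card] at this
  change A.rank + _ = _ at this
  omega

variable [DecidableEq n]

theorem mulVec_adjugate_transpose_eq_zero {R : Type*} [CommRing R] {A : Matrix n n R}
    (hA : A.det = 0) (k : n) : A *ᵥ A.adjugateᵀ k = 0 := by
  ext i
  simpa [hA, mulVec, dotProduct, mul_apply] using congr_fun₂ A.mul_adjugate i k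

theorem det_eq_zero_of_rank_lt_card {R : Type*} [CommRing R] [IsDomain R] {A : Matrix n n R}
    (hA : A.rank < Fintype.card n) : A.det = 0 := by
  by_contra h
  exact hA.ne (rank_of_det_ne_zero h)

theorem adjugate_mul_adjugate_eq_of_rank_add_one_eq_card {A : Matrix n n K}
    (hA : A.rank + 1 = Fintype.card n) (i j k l : n) :
    A.adjugate i k * A.adjugate j l = A.adjugate j k * A.adjugate i l := by
  have hdet : A.det = 0 := det_eq_zero_of_rank_lt_card (by omega)
  exact Submodule.apply_mul_apply_eq_of_finrank_eq_one (finrank_ker_mulVecLin_eq_one hA)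
    (mulVec_adjugate_transpose_eq_zero hdet k) (mulVec_adjugate_transpose_eq_zero hdet l) i j

end Adjugate

section CyclicTridiagonal

variable {R : Type*} [CommRing R] (n : ℕ) (q : R) (t a d : R → R)

/-- The matrix `D(λ)`; the wrap-around of addition in `Fin (n + 1)` produces its two corner
entries. -/
def cyclicTridiagonal (x : R) : Matrix (Fin (n + 1)) (Fin (n + 1)) R :=
  of fun i j =>
    if j = i then t (q ^ (i : ℕ) * x)
    else if j + 1 = i then -a (q ^ (i : ℕ) * x)
    else if j = i + 1 then -d (q ^ (i : ℕ) * x) else 0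

variable {n q}

theorem cyclicTridiagonal_mul (hq : q ^ (n + 1) = 1) (x : R) :
    cyclicTridiagonal n q t a d (q * x) =
      (cyclicTridiagonal n q t a d x).submatrix (finRotate _) (finRotate _) := by
  ext i j
  simp only [cyclicTridiagonal, submatrix_apply, of_apply, finRotate_apply, add_left_inj,
    pow_val_add_one_of_pow_eq_one hq, mul_assoc]

theorem adjugate_cyclicTridiagonal_mul (hq : q ^ (n + 1) = 1) (x : R) (i j : Fin (n + 1)) :
    (cyclicTridiagonal n q t a d (q * x)).adjugate i j =
      (cyclicTridiagonal n q t a d x).adjugate (i + 1) (j + 1) := by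
  rw [cyclicTridiagonal_mul t a d hq, adjugate_submatrix_equiv_self, submatrix_apply,
    finRotate_apply, finRotate_apply]

theorem cyclicTridiagonal_apply_zero (hn : 1 < n) (x : R) :
    cyclicTridiagonal n q t a d x 0 =
      Pi.single 0 (t x) + Pi.single 1 (-d x) + Pi.single (Fin.last n) (-a x) := by
  obtain ⟨h01, h0last, h1last⟩ : (0 : Fin (n + 1)) ≠ 1 ∧ (0 : Fin (n + 1)) ≠ Fin.last n ∧
      (1 : Fin (n + 1)) ≠ Fin.last n := by
    simp only [ne_eq, Fin.ext_iff, Fin.coe_ofNat_eq_mod, Fin.val_last, Nat.zero_mod,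
      Nat.mod_eq_of_lt (by omega : 1 < n + 1)]
    omega
  ext j
  have hlast : j + 1 = 0 ↔ j = Fin.last n := by rw [← Fin.last_add_one, add_left_inj]
  simp only [cyclicTridiagonal, of_apply, Fin.val_zero, pow_zero, one_mul, zero_add, hlast,
    Pi.add_apply, Pi.single_apply]
  grind

theorem det_cyclicTridiagonal (hn : 1 < n) (x : R) :
    (cyclicTridiagonal n q t a d x).det =
      t x * (cyclicTridiagonal n q t a d x).adjugate 0 0
        - d x * (cyclicTridiagonal n q t a d x).adjugate 1 0
        - a x * (cyclicTridiagonal n q t a d x).adjugate (Fin.last n) 0 := by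
  rw [det_eq_sum_mul_adjugate_row _ 0, cyclicTridiagonal_apply_zero t a d hn]
  simp only [Pi.add_apply, Pi.single_apply, add_mul, ite_mul, zero_mul, neg_mul,
    Finset.sum_add_distrib, Finset.sum_ite_eq', Finset.mem_univ, if_true]
  ring

end CyclicTridiagonal

end Matrix

open Matrix in
theorem stmt_14_general (l : ℕ) (hl : 1 ≤ l) (q : ℂ) (hq : IsPrimitiveRoot q (2*l+1))
    (t a d : ℂ → ℂ)
    (D : ℂ → Matrix (Fin (2*l+1)) (Fin (2*l+1)) ℂ)
    (hD : ∀ x : ℂ, D x = Matrix.of fun i j : Fin (2*l+1) =>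
      if j = i then t (q ^ (i : ℕ) * x)
      else if j + 1 = i then -a (q ^ (i : ℕ) * x)
      else if j = i + 1 then -d (q ^ (i : ℕ) * x) else 0)
    (hrank : ∀ x : ℂ, x ≠ 0 → (D x).rank = 2*l)
    (C : Fin (2*l+1) → Fin (2*l+1) → ℂ → ℂ)
    (hC : ∀ i j x, C i j x =
      (-1 : ℂ) ^ ((i : ℕ) + (j : ℕ)) * ((D x).submatrix i.succAbove j.succAbove).det) :
    (∀ x : ℂ, x ≠ 0 → C 0 (Fin.last (2*l)) (q * x) ≠ 0 → C 0 0 x ≠ 0 →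
      C 0 0 (q * x) / C 0 (Fin.last (2*l)) (q * x) = C 0 1 x / C 0 0 x) ∧
    (∀ x : ℂ, x ≠ 0 →
      t x * C 0 0 x = a x * C 0 (Fin.last (2*l)) x + d x * C 0 1 x) := by
  obtain rfl : D = cyclicTridiagonal (2*l) q t a d := funext hD
  have hCadj : ∀ i j x, C i j x = (cyclicTridiagonal (2*l) q t a d x).adjugate j i :=
    fun i j x => by rw [hC, adjugate_fin_succ_eq_det_submatrix]
  have hcorank : ∀ x, x ≠ 0 →
      (cyclicTridiagonal (2*l) q t a d x).rank + 1 = Fintype.card (Fin (2*l+1)) :=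
    fun x hx => by rw [hrank x hx, Fintype.card_fin]
  refine ⟨fun x hx hlast h00 => ?_, fun x hx => ?_⟩
  · rw [div_eq_div_iff hlast h00]
    simp only [hCadj, adjugate_cyclicTridiagonal_mul t a d hq.pow_eq_one, Fin.last_add_one,
      zero_add]
    linear_combination adjugate_mul_adjugate_eq_of_rank_add_one_eq_card (hcorank x hx) 1 0 1 0
  · have hdet := det_cyclicTridiagonal t a d (q := q) (by omega : 1 < 2*l) x
    rw [det_eq_zero_of_rank_lt_card (by have := hcorank x hx; omega)] at hdet
    simp only [hCadj]
    linear_combination -hdet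

/-- cofactor identities (4.17)–(4.20) for the cyclic Baxter matrix
with identically vanishing determinant and corank one. -/
theorem stmt_14 (l : ℕ) (hl : 1 ≤ l) (q : ℂ) (hq : IsPrimitiveRoot q (2*l+1))
    (t a d : ℂ → ℂ)
    (D : ℂ → Matrix (Fin (2*l+1)) (Fin (2*l+1)) ℂ)
    (hD : ∀ x : ℂ, D x = Matrix.of fun i j : Fin (2*l+1) =>
      if j = i then t (q ^ (i : ℕ) * x)
      else if j + 1 = i then -a (q ^ (i : ℕ) * x)
      else if j = i + 1 then -d (q ^ (i : ℕ) * x) else 0)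
    (hdet : ∀ x : ℂ, x ≠ 0 → (D x).det = 0)
    (hrank : ∀ x : ℂ, x ≠ 0 → (D x).rank = 2*l)
    (C : Fin (2*l+1) → Fin (2*l+1) → ℂ → ℂ)
    (hC : ∀ i j x, C i j x =
      (-1 : ℂ) ^ ((i : ℕ) + (j : ℕ)) * ((D x).submatrix i.succAbove j.succAbove).det) :
    (∀ x : ℂ, x ≠ 0 → C 0 (Fin.last (2*l)) (q * x) ≠ 0 → C 0 0 x ≠ 0 →
      C 0 0 (q * x) / C 0 (Fin.last (2*l)) (q * x) = C 0 1 x / C 0 0 x) ∧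
    (∀ x : ℂ, x ≠ 0 →
      t x * C 0 0 x = a x * C 0 (Fin.last (2*l)) x + d x * C 0 1 x) :=
  stmt_14_general l hl q hq t a d D hD hrank C hC
end

section
/- Let p = 2l+1, q a primitive p-th root of unity, and let D(λ) be the cyclic tridiagonal matrix built from Laurent polynomials t, a, d as above. Then the cofactors satisfy the shift identities C_{h+i,k+i}(λ) = C_{h,k}(λ q^i) for all i, h, k ∈ {1,...,p} (indices mod p). -/
/-!
Multiplying the spectral parameter by `q ^ i` shifts every row index of `D(λ)` by `i`; since
`q ^ p = 1` this shift is cyclic, so `D(q ^ i λ)` is `D(λ)` with rows and columns simultaneously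
permuted by `j ↦ j + i`. Cofactors are adjugate entries, and the adjugate commutes with
simultaneous reindexing by a permutation, which gives the identity with no sign to track.
-/

namespace Matrix

/-- The cyclic tridiagonal matrix `D(λ)`, with indices in `ZMod p` realised as `Fin p`. -/
def cyclicTridiag {R : Type*} [CommRing R] (n : ℕ) [NeZero n] (q : R) (t a d : R → R) (x : R) :
    Matrix (Fin n) (Fin n) R :=
  of fun i j =>
    if j = i then t (q ^ (i : ℕ) * x)
    else if j + 1 = i then -a (q ^ (i : ℕ) * x)
    else if j = i + 1 then -d (q ^ (i : ℕ) * x) else 0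

theorem cyclicTridiag_pow_mul {R : Type*} [CommRing R] {n : ℕ} [NeZero n] {q : R}
    (hq : q ^ n = 1) (t a d : R → R) (i : Fin n) (x : R) :
    cyclicTridiag n q t a d (q ^ (i : ℕ) * x) =
      (cyclicTridiag n q t a d x).submatrix (Equiv.addRight i) (Equiv.addRight i) := by
  ext j m
  have hpow : q ^ ((j + i : Fin n) : ℕ) * x = q ^ (j : ℕ) * (q ^ (i : ℕ) * x) := by
    rw [Fin.val_add, ← pow_eq_pow_mod _ hq, pow_add, mul_assoc]
  have hdiag : m + i = j + i ↔ m = j := (add_left_injective i).eq_iff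
  have hsub : m + i + 1 = j + i ↔ m + 1 = j := by
    rw [add_right_comm]; exact (add_left_injective i).eq_iff
  have hsup : m + i = j + i + 1 ↔ m = j + 1 := by
    rw [add_right_comm j i 1]; exact (add_left_injective i).eq_iff
  simp only [cyclicTridiag, submatrix_apply, of_apply, Equiv.coe_addRight, hpow, hdiag, hsub,
    hsup]

theorem neg_one_pow_mul_det_submatrix_succAbove {R : Type*} [CommRing R] {n : ℕ}
    (A : Matrix (Fin (n + 1)) (Fin (n + 1)) R) (i j : Fin (n + 1)) :
    (-1 : R) ^ ((i : ℕ) + (j : ℕ)) * (A.submatrix i.succAbove j.succAbove).det =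
      A.adjugate j i := by
  rw [adjugate_fin_succ_eq_det_submatrix]

end Matrix

/-- shift identities `C_{h+i,k+i}(λ) = C_{h,k}(λ q^i)` for the
cofactors of the cyclic Baxter matrix (indices mod p). -/
theorem stmt_15 (l : ℕ) (q : ℂ) (hq : IsPrimitiveRoot q (2*l+1))
    (t a d : ℂ → ℂ)
    (D : ℂ → Matrix (Fin (2*l+1)) (Fin (2*l+1)) ℂ)
    (hD : ∀ x : ℂ, D x = Matrix.of fun i j : Fin (2*l+1) =>
      if j = i then t (q ^ (i : ℕ) * x)
      else if j + 1 = i then -a (q ^ (i : ℕ) * x)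
      else if j = i + 1 then -d (q ^ (i : ℕ) * x) else 0)
    (C : Fin (2*l+1) → Fin (2*l+1) → ℂ → ℂ)
    (hC : ∀ i j x, C i j x =
      (-1 : ℂ) ^ ((i : ℕ) + (j : ℕ)) * ((D x).submatrix i.succAbove j.succAbove).det) :
    ∀ (i h k : Fin (2*l+1)) (x : ℂ), C (h + i) (k + i) x = C h k (q ^ (i : ℕ) * x) := by
  intro i h k x
  have hD' : D = Matrix.cyclicTridiag (2*l+1) q t a d := funext hD
  rw [hC, hC, hD', Matrix.cyclicTridiag_pow_mul hq.pow_eq_one,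
    Matrix.neg_one_pow_mul_det_submatrix_succAbove, Matrix.neg_one_pow_mul_det_submatrix_succAbove,
    Matrix.adjugate_submatrix_equiv_self]
  rfl
end

section
/- Conversely, let p be odd, q a primitive p-th root of unity, a, d Laurent polynomials, and (λ_1,...,λ_m) a tuple of nonzero complex numbers, pairwise distinct, satisfying the Bethe equations a(λ_c)/d(λ_c) = −q^{2a} ∏_{h=1}^m (qλ_c − λ_h)/(λ_c/q − λ_h) for all c, with d(λ_c) ≠ 0 and λ_c/q ∉ {λ_1,...,λ_m}. Define Q(λ) = λ^a ∏_h (λ_h − λ) and t(λ) = (a(λ)Q(λ/q) + d(λ)Q(λq))/Q(λ). Then t extends to a Laurent polynomial (i.e. Q(λ) divides a(λ)Q(λ/q) + d(λ)Q(λq) in C[λ,λ^{-1}]). -/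
/-- A function `ℂ* → ℂ` given by a Laurent polynomial. -/
def IsLaurentFun (f : ℂ → ℂ) : Prop :=
  ∃ (N : ℕ) (c : ℤ → ℂ), ∀ x : ℂ, x ≠ 0 →
    f x = ∑ j ∈ Finset.Icc (-(N : ℤ)) (N : ℤ), c j * x ^ j

/-!
The Bethe equation at `λ_c` is exactly the vanishing of `F(λ) = a(λ)Q(λ/q) + d(λ)Q(λq)` at `λ_c`.
Writing the Laurent polynomial `F` as `P(λ)/λ^M` with `P` a polynomial, the pairwise distinct
nonzero `λ_c` are roots of `P`, so `∏ (X - λ_c)` divides `P`; since `λ^n` is a unit among Laurent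
polynomials, `Q` divides `F`.
-/

open Polynomial

theorem IsLaurentFun.of_sum {ι : Type*} (s : Finset ι) (c : ι → ℂ) (e : ι → ℤ) {f : ℂ → ℂ}
    (hf : ∀ x : ℂ, x ≠ 0 → f x = ∑ i ∈ s, c i * x ^ e i) : IsLaurentFun f := by
  set N := s.sup fun i => (e i).natAbs
  have he : ∀ i ∈ s, e i ∈ Finset.Icc (-(N : ℤ)) N := fun i hi => by
    have : (e i).natAbs ≤ N := Finset.le_sup (f := fun i => (e i).natAbs) hi
    rw [Finset.mem_Icc]
    omega
  refine ⟨N, fun j => ∑ i ∈ s with e i = j, c i, fun x hx => ?_⟩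
  rw [hf x hx, ← Finset.sum_fiberwise_of_maps_to he]
  refine Finset.sum_congr rfl fun j _ => ?_
  rw [Finset.sum_mul]
  exact Finset.sum_congr rfl fun i hi => by rw [(Finset.mem_filter.mp hi).2]

theorem isLaurentFun_iff {f : ℂ → ℂ} :
    IsLaurentFun f ↔ ∃ (M : ℕ) (P : ℂ[X]), ∀ x : ℂ, x ≠ 0 → f x = P.eval x / x ^ M := by
  constructor
  · rintro ⟨N, c, hf⟩
    refine ⟨N, ∑ j ∈ Finset.Icc (-(N : ℤ)) N, C (c j) * X ^ (j + N).toNat, fun x hx => ?_⟩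
    rw [hf x hx, eval_finsetSum, Finset.sum_div]
    refine Finset.sum_congr rfl fun j hj => ?_
    have hjN : ((j + N).toNat : ℤ) = j + N :=
      Int.toNat_of_nonneg (by rw [Finset.mem_Icc] at hj; omega)
    rw [eval_mul, eval_C, eval_pow, eval_X, mul_div_assoc, ← zpow_natCast, hjN,
      ← zpow_natCast, ← zpow_sub₀ hx, add_sub_cancel_right]
  · rintro ⟨M, P, hf⟩
    refine .of_sum P.support P.coeff (fun k => (k : ℤ) - M) fun x hx => ?_
    rw [hf x hx, eval_eq_sum, sum_def, Finset.sum_div]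
    refine Finset.sum_congr rfl fun k _ => ?_
    rw [zpow_sub₀ hx, zpow_natCast, zpow_natCast, mul_div_assoc]

theorem isLaurentFun_eval_mul (P : ℂ[X]) (c : ℂ) : IsLaurentFun fun x => P.eval (x * c) :=
  isLaurentFun_iff.mpr ⟨0, P.comp (X * C c), fun x _ => by rw [eval_comp, eval_mul, eval_X, eval_C, pow_zero, div_one]⟩

namespace IsLaurentFun

variable {f g : ℂ → ℂ}

theorem mul (hf : IsLaurentFun f) (hg : IsLaurentFun g) : IsLaurentFun fun x => f x * g x := by
  obtain ⟨M, P, hP⟩ := isLaurentFun_iff.mp hf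
  obtain ⟨M', P', hP'⟩ := isLaurentFun_iff.mp hg
  refine isLaurentFun_iff.mpr ⟨M + M', P * P', fun x hx => ?_⟩
  rw [hP x hx, hP' x hx, eval_mul, pow_add, div_mul_div_comm]

theorem add (hf : IsLaurentFun f) (hg : IsLaurentFun g) : IsLaurentFun fun x => f x + g x := by
  obtain ⟨M, P, hP⟩ := isLaurentFun_iff.mp hf
  obtain ⟨M', P', hP'⟩ := isLaurentFun_iff.mp hg
  refine isLaurentFun_iff.mpr ⟨M + M', P * X ^ M' + P' * X ^ M, fun x hx => ?_⟩
  rw [hP x hx, hP' x hx, div_add_div _ _ (pow_ne_zero _ hx) (pow_ne_zero _ hx)]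
  simp only [eval_add, eval_mul, eval_pow, eval_X, pow_add]
  ring

theorem exists_eq_mul_pow_mul_prod_sub {ι : Type*} [Fintype ι] {r : ι → ℂ}
    (hr0 : ∀ i, r i ≠ 0) (hr : Function.Injective r) (n : ℕ) (hf : IsLaurentFun f)
    (hroot : ∀ i, f (r i) = 0) :
    ∃ T : ℂ → ℂ, IsLaurentFun T ∧ ∀ x : ℂ, x ≠ 0 → f x = T x * (x ^ n * ∏ i, (r i - x)) := by
  obtain ⟨M, P, hP⟩ := isLaurentFun_iff.mp hf
  have hProot : ∀ i, P.IsRoot (r i) := fun i => by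
    have := hroot i
    rw [hP _ (hr0 i), div_eq_zero_iff] at this
    exact this.resolve_right (pow_ne_zero _ (hr0 i))
  obtain ⟨R, rfl⟩ : (∏ i, (X - C (r i))) ∣ P :=
    Fintype.prod_dvd_of_coprime (pairwise_coprime_X_sub_C hr) fun i => dvd_iff_isRoot.mpr (hProot i)
  refine ⟨fun x => (C ((-1) ^ Fintype.card ι) * R).eval x / x ^ (M + n),
    isLaurentFun_iff.mpr ⟨_, _, fun _ _ => rfl⟩, fun x hx => ?_⟩
  have hsign : ∏ i, (x - r i) = (-1) ^ Fintype.card ι * ∏ i, (r i - x) := by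
    simp_rw [← neg_sub (r _) x]
    exact Finset.prod_neg _
  rw [hP x hx, eval_mul, eval_prod]
  simp only [eval_sub, eval_X, eval_C, eval_mul, hsign]
  field_simp
  ring

end IsLaurentFun

theorem add_mul_eq_zero_of_bethe {ι : Type*} [Fintype ι] {ℓ : ι → ℂ} {q A D x : ℂ} (n : ℕ)
    (hD : D ≠ 0) (hsep : ∀ h, x / q ≠ ℓ h)
    (hBethe : A / D = -q ^ (2 * n) * ∏ h, (q * x - ℓ h) / (x / q - ℓ h)) :
    A * ((x / q) ^ n * ∏ h, (ℓ h - x / q)) + D * ((x * q) ^ n * ∏ h, (ℓ h - x * q)) = 0 := by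
  have hprod : (∏ h, (q * x - ℓ h) / (x / q - ℓ h)) * ∏ h, (ℓ h - x / q) =
      ∏ h, (ℓ h - x * q) := by
    rw [← Finset.prod_mul_distrib]
    refine Finset.prod_congr rfl fun h _ => ?_
    have := sub_ne_zero.mpr (hsep h)
    field_simp
    ring
  have hpow : (x / q) ^ n * q ^ (2 * n) = (x * q) ^ n := by
    rw [pow_mul, sq, ← mul_pow, div_eq_mul_inv, mul_assoc, ← mul_assoc q⁻¹, inv_mul_mul_self]
  rw [div_eq_iff hD] at hBethe
  linear_combination ((x / q) ^ n * ∏ h, (ℓ h - x / q)) * hBethe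
    + (-q ^ (2 * n) * D * (x / q) ^ n) * hprod - (D * ∏ h, (ℓ h - x * q)) * hpow

theorem stmt_19_general (q : ℂ)
    (m n : ℕ) (ℓ : Fin m → ℂ) (hℓ0 : ∀ h, ℓ h ≠ 0)
    (hdist : Function.Injective ℓ)
    (a d : ℂ → ℂ) (ha : IsLaurentFun a) (hd : IsLaurentFun d)
    (hd0 : ∀ c, d (ℓ c) ≠ 0)
    (hsep : ∀ c h, ℓ c / q ≠ ℓ h)
    (Q : ℂ → ℂ) (hQ : ∀ x : ℂ, Q x = x ^ n * ∏ h, (ℓ h - x))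
    (hBethe : ∀ c : Fin m,
      a (ℓ c) / d (ℓ c) = -q ^ (2*n) * ∏ h, (q * ℓ c - ℓ h) / (ℓ c / q - ℓ h)) :
    ∃ T : ℂ → ℂ, IsLaurentFun T ∧ ∀ x : ℂ, x ≠ 0 →
      a x * Q (x / q) + d x * Q (x * q) = T x * Q x := by
  have hQpoly : ∀ x, Q x = (X ^ n * ∏ h, (C (ℓ h) - X)).eval x := fun x => by
    simp [hQ, eval_prod]
  have hQmul : ∀ c : ℂ, IsLaurentFun fun x => Q (x * c) := fun c => by
    simpa only [hQpoly] using isLaurentFun_eval_mul _ c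
  have hF : IsLaurentFun fun x => a x * Q (x / q) + d x * Q (x * q) :=
    (ha.mul (hQmul q⁻¹)).add (hd.mul (hQmul q))
  obtain ⟨T, hT, hfac⟩ := hF.exists_eq_mul_pow_mul_prod_sub hℓ0 hdist n fun c => by
    simpa only [hQ] using add_mul_eq_zero_of_bethe n (hd0 c) (hsep c) (hBethe c)
  exact ⟨T, hT, fun x hx => by rw [hfac x hx, hQ]⟩

/-- given a solution of the Bethe equations, `Q(λ)` divides
`a(λ)Q(λ/q) + d(λ)Q(λq)` in `ℂ[λ, λ⁻¹]`, so the reconstructed `t` is a genuine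
Laurent polynomial. -/
theorem stmt_19 (p : ℕ) (hp : Odd p) (hp1 : 1 < p) (q : ℂ) (hq : IsPrimitiveRoot q p)
    (m n : ℕ) (ℓ : Fin m → ℂ) (hℓ0 : ∀ h, ℓ h ≠ 0)
    (hdist : Function.Injective ℓ)
    (a d : ℂ → ℂ) (ha : IsLaurentFun a) (hd : IsLaurentFun d)
    (hd0 : ∀ c, d (ℓ c) ≠ 0)
    (hsep : ∀ c h, ℓ c / q ≠ ℓ h)
    (Q : ℂ → ℂ) (hQ : ∀ x : ℂ, Q x = x ^ n * ∏ h, (ℓ h - x))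
    (hBethe : ∀ c : Fin m,
      a (ℓ c) / d (ℓ c) = -q ^ (2*n) * ∏ h, (q * ℓ c - ℓ h) / (ℓ c / q - ℓ h)) :
    ∃ T : ℂ → ℂ, IsLaurentFun T ∧ ∀ x : ℂ, x ≠ 0 →
      a x * Q (x / q) + d x * Q (x * q) = T x * Q x :=
  stmt_19_general q m n ℓ hℓ0 hdist a d ha hd hd0 hsep Q hQ hBethe
end
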